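/- Let (Q, +) be a finite abelian group, φ, ψ automorphisms, a ∈ Q, and A(x,y) = φ(x) + ψ(y) + a. Then A is orthogonal to its (23)-parastrophe if and only if the map x ↦ x + ψ(x) is a bijection of Q. -/

import Mathlib

/-!
Since `B := ⁽²³⁾A` inverts `A x`, the equation `B x y = d` says exactly `y = A x d`. So the
system `A x y = c, B x y = d` has a unique solution iff `x ↦ A x (A x d) = c` has a unique solution,
i.e. `A` and `B` are orthogonal iff every map `x ↦ A x (A x d)` is a bijection. For the T-quasigroup
`A x y = φ x + ψ y + a` this map is `x ↦ φ x + ψ (φ x)` followed by a translation, i.e. the map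
`x ↦ x + ψ x` precomposed with the automorphism `φ` and postcomposed with a translation.
-/

def Orthogonal {α : Type*} (A B : α → α → α) : Prop :=
  ∀ c d : α, ∃! p : α × α, A p.1 p.2 = c ∧ B p.1 p.2 = d

theorem existsUnique_prod_and_snd_eq_iff {α β : Type*} {R : α → β → Prop} {g : α → β} :
    (∃! p : α × β, R p.1 p.2 ∧ p.2 = g p.1) ↔ ∃! x, R x (g x) := by
  constructor
  · rintro ⟨⟨x, y⟩, ⟨hR, hy⟩, huniq⟩
    dsimp only at hR hy
    subst hy
    exact ⟨x, hR, fun x' hx' => congrArg Prod.fst (huniq (x', g x') ⟨hx', rfl⟩)⟩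
  · rintro ⟨x, hR, huniq⟩
    refine ⟨(x, g x), ⟨hR, rfl⟩, ?_⟩
    rintro ⟨x', y'⟩ ⟨hR', hy'⟩
    dsimp only at hR' hy'
    subst hy'
    rw [huniq x' hR']

section Parastrophe

variable {α : Type*} {A B : α → α → α}

theorem parastrophe23_eq_iff (h1 : ∀ x y, A x (B x y) = y) (h2 : ∀ x y, B x (A x y) = y)
    {x y d : α} : B x y = d ↔ y = A x d := by
  constructor
  · rintro rfl
    exact (h1 x y).symm
  · rintro rfl
    exact h2 x d

theorem orthogonal_parastrophe23_iff (h1 : ∀ x y, A x (B x y) = y)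
    (h2 : ∀ x y, B x (A x y) = y) :
    Orthogonal A B ↔ ∀ d, Function.Bijective fun x => A x (A x d) := by
  simp only [Orthogonal, parastrophe23_eq_iff h1 h2, Function.bijective_iff_existsUnique]
  rw [forall_comm]
  exact forall₂_congr fun d c => existsUnique_prod_and_snd_eq_iff (R := fun x y => A x y = c) (g := fun x => A x d)

end Parastrophe

theorem bijective_tQuasigroup_self_comp_iff {Q : Type*} [AddCommGroup Q] (φ ψ : Q ≃+ Q) (a d : Q) :
    (Function.Bijective fun x => φ x + ψ (φ x + ψ d + a) + a) ↔
      Function.Bijective fun x => x + ψ x := by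
  have hcomp : (fun x => φ x + ψ (φ x + ψ d + a) + a) =
      Equiv.addRight (ψ (ψ d + a) + a) ∘ (fun x => x + ψ x) ∘ φ := by
    funext x
    simp only [Function.comp_apply, Equiv.coe_addRight, map_add]
    abel
  rw [hcomp, Equiv.comp_bijective]
  exact Equiv.bijective_comp φ.toEquiv _

theorem T_orth_23_general {Q : Type*} [AddCommGroup Q] (φ ψ : Q ≃+ Q) (a : Q)
    (A p23 : Q → Q → Q) (hA : ∀ x y, A x y = φ x + ψ y + a)
    (h1 : ∀ x y, A x (p23 x y) = y) (h2 : ∀ x y, p23 x (A x y) = y) :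
    (∀ c d : Q, ∃! p : Q × Q, A p.1 p.2 = c ∧ p23 p.1 p.2 = d) ↔
      Function.Bijective (fun x : Q => x + ψ x) := by
  have hsq (d : Q) : (Function.Bijective fun x => A x (A x d)) ↔
      Function.Bijective fun x => x + ψ x := by
    simp only [hA]
    exact bijective_tQuasigroup_self_comp_iff φ ψ a d
  change Orthogonal A p23 ↔ _
  rw [orthogonal_parastrophe23_iff h1 h2]
  exact ⟨fun h => (hsq 0).1 (h 0), fun h d => (hsq d).2 h⟩

/-- a T-quasigroup A(x,y) = φx + ψy + a is orthogonal to its (23)-parastrophe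
iff x ↦ x + ψx is a bijection. -/
theorem T_orth_23 {Q : Type*} [AddCommGroup Q] [Fintype Q] (φ ψ : Q ≃+ Q) (a : Q)
    (A p23 : Q → Q → Q) (hA : ∀ x y, A x y = φ x + ψ y + a)
    (h1 : ∀ x y, A x (p23 x y) = y) (h2 : ∀ x y, p23 x (A x y) = y) :
    (∀ c d : Q, ∃! p : Q × Q, A p.1 p.2 = c ∧ p23 p.1 p.2 = d) ↔
      Function.Bijective (fun x : Q => x + ψ x) :=
  T_orth_23_general φ ψ a A p23 hA h1 h2
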